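/- arXiv:1303.2970 — 5 statements merged into one kernel-verified Lean document; each statement's English description precedes it below -/
import Mathlib

section
/- Let f, g ∈ L^1(B_R(0)) be nonnegative, radially symmetric, radially nonincreasing (rearranged) functions on a ball. If for every convex nondecreasing function Φ : [0,∞) → [0,∞) with Φ(0) = 0 one has ∫ Φ(f) dx ≤ ∫ Φ(g) dx, then f is less concentrated than g, i.e. ∫_{B_r(0)} f dx ≤ ∫_{B_r(0)} g dx for all 0 < r ≤ R. -/
/-!
Test the hypothesis against the truncation `Φ(t) = (t - c)₊`, where `c = g(x₀)` is the value of
`g` on the sphere `‖x₀‖ = r`. Since `g` is radially nonincreasing, `(g - c)₊` equals `g - c` on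
`B_r` and vanishes outside it, while `(f - c)₊ ≥ f - c` everywhere. Hence
`∫_{B_r} (f - g) ≤ ∫_{B_r} (f - c)₊ - ∫_{B_R} (g - c)₊ ≤ ∫_{B_R} (f - c)₊ - ∫_{B_R} (g - c)₊ ≤ 0`.
-/

open MeasureTheory Set Metric

section Truncation

variable {α : Type*} [MeasurableSpace α] {μ : Measure α} {f g : α → ℝ} {c : ℝ}

theorem MeasureTheory.Integrable.max_sub_const_zero (hf : Integrable f μ) (hc : 0 ≤ c) :
    Integrable (fun x => max (f x - c) 0) μ := by
  refine hf.norm.mono' (by fun_prop) (ae_of_all _ fun x => ?_)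
  rw [Real.norm_of_nonneg (le_max_right _ _), Real.norm_eq_abs]
  exact max_le (by linarith [le_abs_self (f x)]) (abs_nonneg _)

theorem setIntegral_le_of_setIntegral_max_sub_const_le {s t : Set α} (hs : MeasurableSet s)
    (ht : MeasurableSet t) (hst : s ⊆ t) (hf : IntegrableOn f t μ) (hg : IntegrableOn g t μ)
    (hc : 0 ≤ c) (hg_ge : ∀ x ∈ s, c ≤ g x) (hg_le : ∀ x ∈ t \ s, g x ≤ c)
    (hfg : ∫ x in t, max (f x - c) 0 ∂μ ≤ ∫ x in t, max (g x - c) 0 ∂μ) :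
    ∫ x in s, f x ∂μ ≤ ∫ x in s, g x ∂μ := by
  have hF : IntegrableOn (fun x => max (f x - c) 0) t μ := Integrable.max_sub_const_zero hf hc
  have hG : IntegrableOn (fun x => max (g x - c) 0) t μ := Integrable.max_sub_const_zero hg hc
  have hG_eq : ∫ x in t, max (g x - c) 0 ∂μ = ∫ x in s, max (g x - c) 0 ∂μ :=
    setIntegral_eq_of_subset_of_forall_sdiff_eq_zero ht hst fun x hx =>
      max_eq_right (sub_nonpos.2 (hg_le x hx))
  have hF_le : ∫ x in s, max (f x - c) 0 ∂μ ≤ ∫ x in t, max (f x - c) 0 ∂μ :=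
    setIntegral_mono_set hF (ae_of_all _ fun _ => le_max_right _ _) hst.eventuallyLE
  have hpointwise : ∀ x ∈ s, f x - g x ≤ max (f x - c) 0 - max (g x - c) 0 := fun x hx => by
    rw [max_eq_left (sub_nonneg.2 (hg_ge x hx))]
    linarith [le_max_left (f x - c) 0]
  have hdiff : ∫ x in s, (f x - g x) ∂μ ≤
      ∫ x in s, (max (f x - c) 0 - max (g x - c) 0) ∂μ :=
    setIntegral_mono_on ((hf.mono_set hst).sub (hg.mono_set hst))
      ((hF.mono_set hst).sub (hG.mono_set hst)) hs hpointwise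
  rw [integral_sub (hf.mono_set hst) (hg.mono_set hst),
    integral_sub (hF.mono_set hst) (hG.mono_set hst)] at hdiff
  linarith

end Truncation

theorem convexOn_max_sub_const_zero (c : ℝ) : ConvexOn ℝ univ fun t : ℝ => max (t - c) 0 :=
  ((convexOn_id convex_univ).sub (concaveOn_const c convex_univ)).sup
    (convexOn_const 0 convex_univ)

theorem exists_sphere_value_separating_ball {E : Type*} [NormedAddCommGroup E] [NormedSpace ℝ E]
    {g : E → ℝ} (hg : ∀ x y : E, ‖x‖ ≤ ‖y‖ → g y ≤ g x) {r : ℝ} (hr : 0 ≤ r) :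
    ∃ x₀ : E, (∀ x ∈ ball 0 r, g x₀ ≤ g x) ∧ ∀ x ∉ ball 0 r, g x ≤ g x₀ := by
  rcases subsingleton_or_nontrivial E with hE | hE
  · exact ⟨0, fun x _ => by rw [Subsingleton.elim x 0], fun x _ => by rw [Subsingleton.elim x 0]⟩
  obtain ⟨x₀, hx₀⟩ := exists_norm_eq E hr
  refine ⟨x₀, fun x hx => hg x x₀ ?_, fun x hx => hg x₀ x ?_⟩
  · rw [mem_ball_zero_iff] at hx
    linarith
  · rw [mem_ball_zero_iff, not_lt] at hx
    linarith

theorem concentration_of_convex_means_general {N : ℕ} (R : ℝ)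
    (f g : EuclideanSpace ℝ (Fin N) → ℝ)
    (hf_int : IntegrableOn f (ball (0 : EuclideanSpace ℝ (Fin N)) R))
    (hg_int : IntegrableOn g (ball (0 : EuclideanSpace ℝ (Fin N)) R))
    (hg_nn : ∀ x, 0 ≤ g x)
    (hg_rd : ∀ x y : EuclideanSpace ℝ (Fin N), ‖x‖ ≤ ‖y‖ → g y ≤ g x)
    (h : ∀ Φ : ℝ → ℝ, ConvexOn ℝ (Ici 0) Φ → MonotoneOn Φ (Ici 0) →
      (∀ t ∈ Ici (0:ℝ), 0 ≤ Φ t) → Φ 0 = 0 →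
      ∫ x in ball (0 : EuclideanSpace ℝ (Fin N)) R, Φ (f x) ≤
        ∫ x in ball (0 : EuclideanSpace ℝ (Fin N)) R, Φ (g x)) :
    ∀ r : ℝ, 0 < r → r ≤ R →
      ∫ x in ball (0 : EuclideanSpace ℝ (Fin N)) r, f x ≤
        ∫ x in ball (0 : EuclideanSpace ℝ (Fin N)) r, g x := by
  intro r hr hrR
  obtain ⟨x₀, hg_ge, hg_le⟩ := exists_sphere_value_separating_ball hg_rd hr.le
  have hc := hg_nn x₀
  have htrunc := h (fun t => max (t - g x₀) 0)
    ((convexOn_max_sub_const_zero _).subset (subset_univ _) (convex_Ici 0))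
    (fun a _ b _ hab => max_le_max (by linarith) le_rfl)
    (fun _ _ => le_max_right _ _) (max_eq_right (by linarith))
  exact setIntegral_le_of_setIntegral_max_sub_const_le measurableSet_ball measurableSet_ball
    (ball_subset_ball hrR) hf_int hg_int hc hg_ge (fun x hx => hg_le x hx.2) htrunc

/-- If two rearranged (radial, nonnegative, radially nonincreasing) integrable functions on a
ball satisfy `∫ Φ(f) ≤ ∫ Φ(g)` for every convex nondecreasing `Φ : [0,∞) → [0,∞)` with
`Φ(0) = 0`, then `f` is less concentrated than `g`. -/
theorem concentration_of_convex_means {N : ℕ} (R : ℝ) (hR : 0 < R)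
    (f g : EuclideanSpace ℝ (Fin N) → ℝ)
    (hf_int : IntegrableOn f (ball (0 : EuclideanSpace ℝ (Fin N)) R))
    (hg_int : IntegrableOn g (ball (0 : EuclideanSpace ℝ (Fin N)) R))
    (hf_nn : ∀ x, 0 ≤ f x) (hg_nn : ∀ x, 0 ≤ g x)
    (hf_rd : ∀ x y : EuclideanSpace ℝ (Fin N), ‖x‖ ≤ ‖y‖ → f y ≤ f x)
    (hg_rd : ∀ x y : EuclideanSpace ℝ (Fin N), ‖x‖ ≤ ‖y‖ → g y ≤ g x)
    (h : ∀ Φ : ℝ → ℝ, ConvexOn ℝ (Ici 0) Φ → MonotoneOn Φ (Ici 0) →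
      (∀ t ∈ Ici (0:ℝ), 0 ≤ Φ t) → Φ 0 = 0 →
      ∫ x in ball (0 : EuclideanSpace ℝ (Fin N)) R, Φ (f x) ≤
        ∫ x in ball (0 : EuclideanSpace ℝ (Fin N)) R, Φ (g x)) :
    ∀ r : ℝ, 0 < r → r ≤ R →
      ∫ x in ball (0 : EuclideanSpace ℝ (Fin N)) r, f x ≤
        ∫ x in ball (0 : EuclideanSpace ℝ (Fin N)) r, g x :=
  concentration_of_convex_means_general R f g hf_int hg_int hg_nn hg_rd h
end

section
/- If f, g are rearranged integrable functions on a ball with f ≺ g, then ‖f‖_{L^p} ≤ ‖g‖_{L^p} for every p ∈ [1,∞]. -/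
open MeasureTheory Set Metric ENNReal

/-!
Because `f` is radially nonincreasing, each superlevel set `{f > t}` inside the ball `B` of
radius `R` is, up to a sphere of measure zero, a centred ball `B_r ⊆ B`, on which `f > t`. Hence
`∫_B (f - t)₊ = ∫_{B_r} (f - t) ≤ ∫_{B_r} (g - t) ≤ ∫_B (g - t)₊` for every `t`. These integrals
control every `L^p` norm with `p ≥ 1`: for `1 < q < ∞` integrate the identity
`s^q = q (q - 1) ∫_0^∞ (s - t)₊ t^(q-2) dt`, for `q = 1` take `t = 0`, and for `q = ∞` take
`t = ‖g‖_∞`, which forces `∫_B (f - t)₊ = 0`.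
-/

theorem integral_sub_mul_rpow {q s : ℝ} (hq : 1 < q) (hs : 0 ≤ s) :
    ∫ t in (0 : ℝ)..s, (s - t) * t ^ (q - 2) = s ^ q / (q * (q - 1)) := by
  have hsplit : EqOn (fun t : ℝ => (s - t) * t ^ (q - 2))
      (fun t => s * t ^ (q - 2) - t ^ (q - 1)) (uIcc 0 s) := fun t ht => by
    rw [uIcc_of_le hs] at ht
    dsimp only
    rw [show q - 1 = q - 2 + 1 by ring, Real.rpow_add_one' ht.1 (by linarith)]
    ring
  have hint : ∀ r : ℝ, -1 < r → IntervalIntegrable (fun t : ℝ => t ^ r) volume 0 s :=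
    fun r hr => intervalIntegral.intervalIntegrable_rpow' hr
  have hpow : s ^ q = s ^ (q - 1) * s := by
    rw [← Real.rpow_add_one' hs (by linarith), sub_add_cancel]
  rw [intervalIntegral.integral_congr hsplit, intervalIntegral.integral_sub
    ((hint _ (by linarith)).const_mul s) (hint _ (by linarith)),
    intervalIntegral.integral_const_mul, integral_rpow (Or.inl (by linarith)),
    integral_rpow (Or.inl (by linarith)), Real.zero_rpow (by linarith),
    Real.zero_rpow (by linarith), show q - 2 + 1 = q - 1 by ring, show q - 1 + 1 = q by ring, hpow]
  have : q - 1 ≠ 0 := by linarith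
  have : q ≠ 0 := by linarith
  field_simp
  ring

theorem ofReal_rpow_eq_mul_lintegral_ofReal_sub {q : ℝ} (hq : 1 < q) (s : ℝ) :
    ENNReal.ofReal s ^ q =
      ENNReal.ofReal (q * (q - 1)) *
        ∫⁻ t in Ioi 0, ENNReal.ofReal (s - t) * ENNReal.ofReal t ^ (q - 2) := by
  have hq0 : 0 < q * (q - 1) := by nlinarith
  have hcombine : ∀ t ∈ Ioi (0 : ℝ), ENNReal.ofReal (s - t) * ENNReal.ofReal t ^ (q - 2) =
      ENNReal.ofReal ((s - t) * t ^ (q - 2)) := fun t ht => by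
    rw [ENNReal.ofReal_rpow_of_pos ht, ENNReal.ofReal_mul' (Real.rpow_nonneg ht.le _)]
  rw [setLIntegral_congr_fun measurableSet_Ioi hcombine]
  rcases le_or_gt s 0 with hs | hs
  · have hzero : ∀ t ∈ Ioi (0 : ℝ), ENNReal.ofReal ((s - t) * t ^ (q - 2)) = 0 := fun t ht =>
      ENNReal.ofReal_of_nonpos (mul_nonpos_of_nonpos_of_nonneg (by linarith [mem_Ioi.1 ht])
        (Real.rpow_nonneg ht.le _))
    rw [setLIntegral_congr_fun measurableSet_Ioi hzero, ENNReal.ofReal_of_nonpos hs,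
      ENNReal.zero_rpow_of_pos (by linarith), lintegral_zero, mul_zero]
  · rw [← lintegral_inter_add_sdiff _ _ (measurableSet_Iic (a := s)), Ioi_inter_Iic]
    have hzero : ∫⁻ t in Ioi 0 \ Iic s, ENNReal.ofReal ((s - t) * t ^ (q - 2)) = 0 := by
      refine (setLIntegral_congr_fun (measurableSet_Ioi.diff measurableSet_Iic)
        fun t ht => ENNReal.ofReal_of_nonpos ?_).trans lintegral_zero
      exact mul_nonpos_of_nonpos_of_nonneg (by linarith [not_le.1 (mem_Iic.not.1 ht.2)])
        (Real.rpow_nonneg ht.1.le _)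
    have hint : IntegrableOn (fun t => (s - t) * t ^ (q - 2)) (Ioc 0 s) := by
      rw [← intervalIntegrable_iff_integrableOn_Ioc_of_le hs.le]
      exact (intervalIntegral.intervalIntegrable_rpow' (by linarith)).continuousOn_mul
        (by fun_prop)
    rw [hzero, add_zero, ← ofReal_integral_eq_lintegral_ofReal hint
      ((ae_restrict_iff' measurableSet_Ioc).2 (ae_of_all _ fun t ht =>
        mul_nonneg (by linarith [ht.2]) (Real.rpow_nonneg ht.1.le _))),
      ← intervalIntegral.integral_of_le hs.le, integral_sub_mul_rpow hq hs.le,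
      ← ENNReal.ofReal_mul hq0.le, mul_div_cancel₀ _ hq0.ne', ENNReal.ofReal_rpow_of_pos hs]

section Majorization

variable {α : Type*} [MeasurableSpace α] {μ : Measure α} {f g : α → ℝ}

theorem lintegral_ofReal_rpow_eq_lintegral_lintegral_ofReal_sub [SFinite μ]
    (hf : AEMeasurable f μ) {q : ℝ} (hq : 1 < q) :
    ∫⁻ x, ENNReal.ofReal (f x) ^ q ∂μ =
      ENNReal.ofReal (q * (q - 1)) *
        ∫⁻ t in Ioi 0, (∫⁻ x, ENNReal.ofReal (f x - t) ∂μ) * ENNReal.ofReal t ^ (q - 2) := by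
  have hF : AEMeasurable (Function.uncurry fun x t => ENNReal.ofReal (f x - t) *
      ENNReal.ofReal t ^ (q - 2)) (μ.prod (volume.restrict (Ioi 0))) :=
    (hf.comp_fst.sub measurable_snd.aemeasurable).ennreal_ofReal.mul
      (measurable_snd.ennreal_ofReal.pow_const _).aemeasurable
  simp_rw [ofReal_rpow_eq_mul_lintegral_ofReal_sub hq, lintegral_const_mul' _ _ ofReal_ne_top]
  rw [lintegral_lintegral_swap hF]
  simp_rw [lintegral_mul_const'' _ (hf.sub_const _).ennreal_ofReal]

theorem ofReal_integral_le_lintegral_ofReal (f : α → ℝ) :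
    ENNReal.ofReal (∫ x, f x ∂μ) ≤ ∫⁻ x, ENNReal.ofReal (f x) ∂μ := by
  by_cases hf : Integrable f μ
  · exact ENNReal.ofReal_le_of_le_toReal ((integral_eq_lintegral_pos_part_sub_lintegral_neg_part
      hf).trans_le (sub_le_self _ toReal_nonneg))
  · simp [integral_undef hf]

theorem lintegral_ofReal_rpow_le_of_forall_lintegral_ofReal_sub_le [SFinite μ]
    (hf : AEMeasurable f μ) (hg : AEMeasurable g μ)
    (hfg : ∀ t, ∫⁻ x, ENNReal.ofReal (f x - t) ∂μ ≤ ∫⁻ x, ENNReal.ofReal (g x - t) ∂μ)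
    {q : ℝ} (hq : 1 ≤ q) :
    ∫⁻ x, ENNReal.ofReal (f x) ^ q ∂μ ≤ ∫⁻ x, ENNReal.ofReal (g x) ^ q ∂μ := by
  rcases hq.eq_or_lt with rfl | hq
  · simpa using hfg 0
  rw [lintegral_ofReal_rpow_eq_lintegral_lintegral_ofReal_sub hf hq,
    lintegral_ofReal_rpow_eq_lintegral_lintegral_ofReal_sub hg hq]
  gcongr _ * ∫⁻ _ in _, ?_ * _ with t
  exact hfg t

theorem eLpNormEssSup_le_of_forall_lintegral_ofReal_sub_le (hf_nn : ∀ x, 0 ≤ f x)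
    (hf : AEMeasurable f μ)
    (hfg : ∀ t, ∫⁻ x, ENNReal.ofReal (f x - t) ∂μ ≤ ∫⁻ x, ENNReal.ofReal (g x - t) ∂μ) :
    eLpNormEssSup f μ ≤ eLpNormEssSup g μ := by
  set M := eLpNormEssSup g μ
  rcases eq_top_or_lt_top M with hM | hM
  · exact hM ▸ le_top
  have hg_le : ∀ᵐ x ∂μ, g x ≤ M.toReal := (enorm_ae_le_eLpNormEssSup g μ).mono fun x hx =>
    (Real.le_norm_self _).trans (by simpa using ENNReal.toReal_mono hM.ne hx)
  have hg_zero : ∫⁻ x, ENNReal.ofReal (g x - M.toReal) ∂μ = 0 :=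
    (lintegral_congr_ae (hg_le.mono fun x hx => ENNReal.ofReal_of_nonpos (sub_nonpos.2 hx))).trans
      lintegral_zero
  have hf_le : ∀ᵐ x ∂μ, ENNReal.ofReal (f x - M.toReal) = 0 :=
    (lintegral_eq_zero_iff' (hf.sub_const _).ennreal_ofReal).1 (le_zero_iff.1 (hg_zero ▸ hfg _))
  refine eLpNormEssSup_le_of_ae_enorm_bound (hf_le.mono fun x hx => ?_)
  rw [Real.enorm_eq_ofReal (hf_nn x), ← ENNReal.ofReal_toReal hM.ne]
  exact ENNReal.ofReal_le_ofReal (sub_nonpos.1 (ENNReal.ofReal_eq_zero.1 hx))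

theorem eLpNorm_le_of_forall_lintegral_ofReal_sub_le [SFinite μ] (hf_nn : ∀ x, 0 ≤ f x)
    (hf : AEMeasurable f μ) (hg : AEMeasurable g μ)
    (hfg : ∀ t, ∫⁻ x, ENNReal.ofReal (f x - t) ∂μ ≤ ∫⁻ x, ENNReal.ofReal (g x - t) ∂μ)
    {p : ℝ≥0∞} (hp : 1 ≤ p) :
    eLpNorm f p μ ≤ eLpNorm g p μ := by
  rcases eq_or_ne p ∞ with rfl | hp_top
  · simpa only [eLpNorm_exponent_top] using
      eLpNormEssSup_le_of_forall_lintegral_ofReal_sub_le hf_nn hf hfg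
  have hp0 : p ≠ 0 := (zero_lt_one.trans_le hp).ne'
  have hq : 1 ≤ p.toReal := by simpa using ENNReal.toReal_mono hp_top hp
  rw [eLpNorm_eq_lintegral_rpow_enorm_toReal hp0 hp_top,
    eLpNorm_eq_lintegral_rpow_enorm_toReal hp0 hp_top]
  gcongr ?_ ^ _
  calc ∫⁻ x, ‖f x‖ₑ ^ p.toReal ∂μ = ∫⁻ x, ENNReal.ofReal (f x) ^ p.toReal ∂μ := by
        simp_rw [Real.enorm_eq_ofReal (hf_nn _)]
    _ ≤ ∫⁻ x, ENNReal.ofReal (g x) ^ p.toReal ∂μ :=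
        lintegral_ofReal_rpow_le_of_forall_lintegral_ofReal_sub_le hf hg hfg hq
    _ ≤ ∫⁻ x, ‖g x‖ₑ ^ p.toReal ∂μ := by
        gcongr with x
        exact Real.ofReal_le_enorm _

end Majorization

section Radial

variable {E : Type*} [NormedAddCommGroup E] [NormedSpace ℝ E] [MeasurableSpace E] [BorelSpace E]
  [FiniteDimensional ℝ E] {μ : Measure E} [μ.IsAddHaarMeasure]

variable (μ) in
theorem exists_ae_eq_ball_of_norm_lt_imp_mem {S : Set E} {R : ℝ} (hSR : S ⊆ ball 0 R)
    (hS : ∀ x y, ‖x‖ < ‖y‖ → y ∈ S → x ∈ S) : ∃ r ≤ R, S =ᵐ[μ] ball (0 : E) r := by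
  rcases S.eq_empty_or_nonempty with rfl | hne
  · exact ⟨min R 0, min_le_left _ _, .of_eq (ball_eq_empty.2 (min_le_right _ _)).symm⟩
  obtain hE | hE := subsingleton_or_nontrivial E
  · obtain ⟨x₀, hx₀⟩ := hne
    exact ⟨R, le_rfl, .of_eq (hSR.antisymm fun y _ => Subsingleton.elim x₀ y ▸ hx₀)⟩
  have hbdd : BddAbove (norm '' S) :=
    ⟨R, forall_mem_image.2 fun x hx => (mem_ball_zero_iff.1 (hSR hx)).le⟩
  set ρ := sSup (norm '' S)
  have hball : ball 0 ρ ⊆ S := fun x hx => by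
    obtain ⟨_, ⟨y, hy, rfl⟩, hxy⟩ := exists_lt_of_lt_csSup (hne.image _) (mem_ball_zero_iff.1 hx)
    exact hS x y hxy hy
  have hclosedBall : S ⊆ closedBall 0 ρ := fun x hx =>
    mem_closedBall_zero_iff.2 (le_csSup hbdd (mem_image_of_mem _ hx))
  have hρR : ρ ≤ R :=
    csSup_le (hne.image _) (forall_mem_image.2 fun x hx => (mem_ball_zero_iff.1 (hSR hx)).le)
  refine ⟨ρ, hρR, ae_eq_set.2 ⟨?_, by rw [sdiff_eq_empty.2 hball, measure_empty]⟩⟩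
  refine measure_mono_null ?_ (Measure.addHaar_sphere μ 0 ρ)
  rw [← closedBall_sdiff_ball]
  exact sdiff_subset_sdiff_left hclosedBall

theorem lintegral_ofReal_sub_le_of_integral_ball_le {f g : E → ℝ} {R : ℝ}
    (hf : IntegrableOn f (ball 0 R) μ) (hg : IntegrableOn g (ball 0 R) μ)
    (hf_anti : ∀ x y : E, ‖x‖ ≤ ‖y‖ → f y ≤ f x)
    (hfg : ∀ r, 0 < r → r ≤ R → ∫ x in ball 0 r, f x ∂μ ≤ ∫ x in ball 0 r, g x ∂μ) (t : ℝ) :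
    ∫⁻ x in ball 0 R, ENNReal.ofReal (f x - t) ∂μ ≤
      ∫⁻ x in ball 0 R, ENNReal.ofReal (g x - t) ∂μ := by
  obtain ⟨r, hrR, hS⟩ := exists_ae_eq_ball_of_norm_lt_imp_mem μ
    (S := {x | t < f x} ∩ ball 0 R) inter_subset_right fun x y hxy ⟨hy, hyR⟩ =>
      ⟨hy.trans_le (hf_anti x y hxy.le), mem_ball_zero_iff.2 (hxy.trans (mem_ball_zero_iff.1 hyR))⟩
  have hsub : ball (0 : E) r ⊆ ball 0 R := ball_subset_ball hrR
  have hin : ∀ᵐ x ∂μ, x ∈ ball (0 : E) r → t < f x :=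
    hS.mem_iff.mono fun x hx hxr => (hx.2 hxr).1
  have hout : ∀ᵐ x ∂μ, x ∈ ball 0 R \ ball (0 : E) r → f x ≤ t :=
    hS.mem_iff.mono fun x hx hxr => not_lt.1 fun h => hxr.2 (hx.1 ⟨h, hxr.1⟩)
  have hconst : IntegrableOn (fun _ => t) (ball (0 : E) r) μ :=
    integrableOn_const measure_ball_lt_top.ne
  have hball : ∫ x in ball 0 r, (f x - t) ∂μ ≤ ∫ x in ball 0 r, (g x - t) ∂μ := by
    rcases le_or_gt r 0 with hr | hr
    · simp [ball_eq_empty.2 hr]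
    rw [integral_sub (hf.mono_set hsub) hconst, integral_sub (hg.mono_set hsub) hconst]
    exact sub_le_sub_right (hfg r hr hrR) _
  calc ∫⁻ x in ball 0 R, ENNReal.ofReal (f x - t) ∂μ
      = ∫⁻ x in ball 0 r, ENNReal.ofReal (f x - t) ∂μ := by
        rw [← lintegral_inter_add_sdiff _ (ball 0 R) measurableSet_ball, inter_eq_right.2 hsub,
          setLIntegral_congr_fun_ae (measurableSet_ball.diff measurableSet_ball)
            (hout.mono fun x hx hxs => ENNReal.ofReal_of_nonpos (sub_nonpos.2 (hx hxs))),
          lintegral_zero, add_zero]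
    _ = ENNReal.ofReal (∫ x in ball 0 r, (f x - t) ∂μ) :=
        (ofReal_integral_eq_lintegral_ofReal ((hf.mono_set hsub).sub hconst)
          ((ae_restrict_iff' measurableSet_ball).2
            (hin.mono fun x hx hxr => sub_nonneg.2 (hx hxr).le))).symm
    _ ≤ ENNReal.ofReal (∫ x in ball 0 r, (g x - t) ∂μ) := ENNReal.ofReal_le_ofReal hball
    _ ≤ ∫⁻ x in ball 0 r, ENNReal.ofReal (g x - t) ∂μ := ofReal_integral_le_lintegral_ofReal _
    _ ≤ ∫⁻ x in ball 0 R, ENNReal.ofReal (g x - t) ∂μ := lintegral_mono_set hsub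

end Radial

theorem lpNorm_le_of_concentration_general {N : ℕ} (R : ℝ)
    (f g : EuclideanSpace ℝ (Fin N) → ℝ)
    (hf_int : IntegrableOn f (ball (0 : EuclideanSpace ℝ (Fin N)) R))
    (hg_int : IntegrableOn g (ball (0 : EuclideanSpace ℝ (Fin N)) R))
    (hf_nn : ∀ x, 0 ≤ f x)
    (hf_rd : ∀ x y : EuclideanSpace ℝ (Fin N), ‖x‖ ≤ ‖y‖ → f y ≤ f x)
    (hprec : ∀ r : ℝ, 0 < r → r ≤ R →
      ∫ x in ball (0 : EuclideanSpace ℝ (Fin N)) r, f x ≤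
        ∫ x in ball (0 : EuclideanSpace ℝ (Fin N)) r, g x)
    (p : ℝ≥0∞) (hp : 1 ≤ p) :
    eLpNorm f p (volume.restrict (ball (0 : EuclideanSpace ℝ (Fin N)) R)) ≤
      eLpNorm g p (volume.restrict (ball (0 : EuclideanSpace ℝ (Fin N)) R)) :=
  eLpNorm_le_of_forall_lintegral_ofReal_sub_le hf_nn hf_int.aemeasurable hg_int.aemeasurable
    (lintegral_ofReal_sub_le_of_integral_ball_le hf_int hg_int hf_rd hprec) hp

/-- If `f, g` are rearranged integrable functions on a ball with `f ≺ g`, then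
`‖f‖_{L^p} ≤ ‖g‖_{L^p}` for every `p ∈ [1,∞]`. -/
theorem lpNorm_le_of_concentration {N : ℕ} (R : ℝ) (hR : 0 < R)
    (f g : EuclideanSpace ℝ (Fin N) → ℝ)
    (hf_int : IntegrableOn f (ball (0 : EuclideanSpace ℝ (Fin N)) R))
    (hg_int : IntegrableOn g (ball (0 : EuclideanSpace ℝ (Fin N)) R))
    (hf_nn : ∀ x, 0 ≤ f x) (hg_nn : ∀ x, 0 ≤ g x)
    (hf_rd : ∀ x y : EuclideanSpace ℝ (Fin N), ‖x‖ ≤ ‖y‖ → f y ≤ f x)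
    (hg_rd : ∀ x y : EuclideanSpace ℝ (Fin N), ‖x‖ ≤ ‖y‖ → g y ≤ g x)
    (hprec : ∀ r : ℝ, 0 < r → r ≤ R →
      ∫ x in ball (0 : EuclideanSpace ℝ (Fin N)) r, f x ≤
        ∫ x in ball (0 : EuclideanSpace ℝ (Fin N)) r, g x)
    (p : ℝ≥0∞) (hp : 1 ≤ p) :
    eLpNorm f p (volume.restrict (ball (0 : EuclideanSpace ℝ (Fin N)) R)) ≤
      eLpNorm g p (volume.restrict (ball (0 : EuclideanSpace ℝ (Fin N)) R)) :=
  lpNorm_le_of_concentration_general R f g hf_int hg_int hf_nn hf_rd hprec p hp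
end

section
/- Let B : [0,∞) → [0,∞) be convex, C¹, with B′ > 0, and let v*, V* : [0,∞) → [0,∞) be nonincreasing C¹ functions. Define Z(s) = ∫_0^s (v*(τ) − V*(τ)) dτ and Y(s) = ∫_0^s (B(v*(τ)) − B(V*(τ))) dτ. If Z attains its maximum over [0,∞) at s = 0 (i.e. Z(s) ≤ Z(0) = 0 for all s), then Y(s) ≤ 0 for all s ≥ 0. -/
/-!
Convexity gives the tangent-line bound `B(v) - B(V) ≤ B'(v) (v - V)`, so `Y(s)` is at most
`∫_0^s g (v - V)` with the weight `g = B' ∘ v`, which is nonnegative and nonincreasing because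
`B'` and `v` are monotone. Writing `g(τ) = ∫_0^∞ 1{t < g(τ)} dt` and swapping the integrals turns
this into an integral over `t` of `∫ (v - V)` over the superlevel sets `{g > t}`; these are initial
segments of `[0, s]`, so each inner integral is a value `Z(ξ) ≤ 0`. This layer-cake argument
replaces the integration by parts against `(B' ∘ v)'`, which would need `B ∈ C²`.
-/

open Set MeasureTheory

theorem integral_mul_eq_integral_setIntegral_lt {α : Type*} [MeasurableSpace α] {μ : Measure α}
    [SFinite μ] {G h : α → ℝ} {M : ℝ} (hG : Measurable G) (hG0 : ∀ x, 0 ≤ G x)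
    (hGM : ∀ x, G x ≤ M) (hh : Integrable h μ) :
    ∫ x, G x * h x ∂μ = ∫ t in Ioc 0 M, ∫ x in {x | t < G x}, h x ∂μ := by
  set F : α → ℝ → ℝ := fun x t => if t < G x then h x else 0
  have hF : Function.uncurry F = {p : α × ℝ | p.2 < G p.1}.indicator (fun p => h p.1) := by
    ext ⟨x, t⟩; simp [F, indicator_apply]
  have hF_int : Integrable (Function.uncurry F) (μ.prod (volume.restrict (Ioc 0 M))) := by
    rw [hF]
    exact (hh.comp_fst _).indicator (measurableSet_lt measurable_snd (hG.comp measurable_fst))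
  have h_inner (x : α) : ∫ t in Ioc 0 M, F x t = G x * h x := by
    have hF_x : F x = (Iio (G x)).indicator (fun _ => h x) := by
      ext t; simp [F, indicator_apply]
    have h_dom : Ioc 0 M ∩ Iio (G x) = Ioo 0 (G x) := by
      ext t
      simp only [mem_inter_iff, mem_Ioc, mem_Iio, mem_Ioo]
      grind [hGM x]
    rw [hF_x, setIntegral_indicator measurableSet_Iio, h_dom, setIntegral_const,
      Real.volume_real_Ioo_of_le (hG0 x), sub_zero, smul_eq_mul]
  have h_outer (t : ℝ) : ∫ x, F x t ∂μ = ∫ x in {x | t < G x}, h x ∂μ := by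
    rw [← MeasureTheory.integral_indicator (measurableSet_lt measurable_const hG)]
    simp [F, indicator_apply]
  simp_rw [← h_inner, integral_integral_swap hF_int, h_outer]

theorem IsLowerSet.setIntegral_inter_Ioc_nonpos {L : Set ℝ} (hL : IsLowerSet L) {a b : ℝ}
    {h : ℝ → ℝ} (hZ : ∀ u ∈ Icc a b, ∫ x in a..u, h x ≤ 0) :
    ∫ x in L ∩ Ioc a b, h x ≤ 0 := by
  set S := L ∩ Ioc a b
  obtain hS | ⟨y, hyS⟩ := S.eq_empty_or_nonempty
  · simp [S, hS]
  have hS_bdd : BddAbove S := ⟨b, fun x hx => hx.2.2⟩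
  set c := sSup S
  have hac : a ≤ c := hyS.2.1.le.trans (le_csSup hS_bdd hyS)
  have hcb : c ≤ b := csSup_le ⟨y, hyS⟩ fun x hx => hx.2.2
  have hS_sub_Ioc : S ⊆ Ioc a c := fun x hx => ⟨hx.2.1, le_csSup hS_bdd hx⟩
  have hIoo_sub_S : Ioo a c ⊆ S := by
    intro x hx
    obtain ⟨z, hzS, hxz⟩ := exists_lt_of_lt_csSup ⟨y, hyS⟩ hx.2
    exact ⟨hL hxz.le hzS.1, hx.1, hxz.le.trans hzS.2.2⟩
  have hS_ae : S =ᵐ[volume] Ioc a c :=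
    hS_sub_Ioc.eventuallyLE.antisymm (Ioo_ae_eq_Ioc.symm.le.trans hIoo_sub_S.eventuallyLE)
  rw [setIntegral_congr_set hS_ae, ← intervalIntegral.integral_of_le hac]
  exact hZ c ⟨hac, hcb⟩

theorem AntitoneOn.intervalIntegrable_of_le {a b : ℝ} {g : ℝ → ℝ} (hab : a ≤ b)
    (hg : AntitoneOn g (Icc a b)) : IntervalIntegrable g volume a b :=
  (show AntitoneOn g (uIcc a b) by rwa [uIcc_of_le hab]).intervalIntegrable

theorem AntitoneOn.intervalIntegrable_mul {a b : ℝ} {g h : ℝ → ℝ} (hab : a ≤ b)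
    (hg : AntitoneOn g (Icc a b)) (hh : IntervalIntegrable h volume a b) :
    IntervalIntegrable (fun x => g x * h x) volume a b := by
  rw [intervalIntegrable_iff_integrableOn_Ioc_of_le hab] at hh ⊢
  refine hh.bdd_mul (c := max ‖g b‖ ‖g a‖) ?_ ?_
  · exact (hg.intervalIntegrable_of_le hab).1.aestronglyMeasurable
  · filter_upwards [ae_restrict_mem measurableSet_Ioc] with x hx
    have hx' := Ioc_subset_Icc_self hx
    exact abs_le_max_abs_abs (hg hx' ⟨hab, le_rfl⟩ hx'.2) (hg ⟨le_rfl, hab⟩ hx' hx'.1)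

theorem AntitoneOn.intervalIntegral_mul_nonpos {a b : ℝ} {g h : ℝ → ℝ} (hab : a ≤ b)
    (hg : AntitoneOn g (Icc a b)) (hgb : 0 ≤ g b) (hh : IntervalIntegrable h volume a b)
    (hZ : ∀ u ∈ Icc a b, ∫ x in a..u, h x ≤ 0) :
    ∫ x in a..b, g x * h x ≤ 0 := by
  -- Clamping to `[a, b]` makes `g` globally antitone, hence measurable, without changing the
  -- integral.
  set G : ℝ → ℝ := fun x => g (max a (min b x))
  have hG_mem (x : ℝ) : max a (min b x) ∈ Icc a b :=
    ⟨le_max_left _ _, max_le hab (min_le_left _ _)⟩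
  have hG_anti : Antitone G := fun x y hxy =>
    hg (hG_mem x) (hG_mem y) (max_le_max le_rfl (min_le_min le_rfl hxy))
  have hG_eq : EqOn G g (Icc a b) := fun x hx => by
    simp only [G, min_eq_right hx.2, max_eq_right hx.1]
  calc ∫ x in a..b, g x * h x = ∫ x in Ioc a b, G x * h x := by
        rw [intervalIntegral.integral_of_le hab]
        exact setIntegral_congr_fun measurableSet_Ioc fun x hx => by
          rw [hG_eq (Ioc_subset_Icc_self hx)]
    _ = ∫ t in Ioc 0 (g a), ∫ x in {x | t < G x}, h x ∂(volume.restrict (Ioc a b)) :=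
        integral_mul_eq_integral_setIntegral_lt hG_anti.measurable
          (fun x => hgb.trans (hg (hG_mem x) ⟨hab, le_rfl⟩ (hG_mem x).2))
          (fun x => hg ⟨le_rfl, hab⟩ (hG_mem x) (hG_mem x).1) hh.1
    _ ≤ 0 := integral_nonpos fun t => by
        rw [Measure.restrict_restrict (measurableSet_lt measurable_const hG_anti.measurable)]
        exact IsLowerSet.setIntegral_inter_Ioc_nonpos
          (fun x y hyx hx => lt_of_lt_of_le hx (hG_anti hyx)) hZ

theorem ConvexOn.mul_sub_le_sub_of_hasDerivAt {S : Set ℝ} {f : ℝ → ℝ} {f' x y : ℝ}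
    (hf : ConvexOn ℝ S f) (hx : x ∈ S) (hy : y ∈ S) (hfx : HasDerivAt f f' x) :
    f' * (y - x) ≤ f y - f x := by
  rcases lt_trichotomy x y with hxy | rfl | hyx
  · have := hf.le_slope_of_hasDerivAt hx hy hxy hfx
    rwa [slope_def_field, le_div_iff₀ (sub_pos.2 hxy)] at this
  · simp
  · have := hf.slope_le_of_hasDerivAt hy hx hyx hfx
    rw [slope_def_field, div_le_iff₀ (sub_pos.2 hyx)] at this
    linarith

theorem ConvexOn.monotoneOn_of_hasDerivAt {S : Set ℝ} {f f' : ℝ → ℝ} (hf : ConvexOn ℝ S f)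
    (hf' : ∀ x ∈ S, HasDerivAt f (f' x) x) : MonotoneOn f' S :=
  (hf.monotoneOn_deriv fun x hx => (hf' x hx).differentiableAt).congr fun x hx => (hf' x hx).deriv

theorem Y_nonpos_of_Z_nonpos_general (B B' v V : ℝ → ℝ)
    (hBconv : ConvexOn ℝ (Ici 0) B)
    (hBd : ∀ x ∈ Ici (0:ℝ), HasDerivAt B (B' x) x)
    (hB'pos : ∀ x ∈ Ici (0:ℝ), 0 < B' x)
    (hvnn : ∀ s, 0 ≤ v s) (hVnn : ∀ s, 0 ≤ V s)
    (hvmono : AntitoneOn v (Ici 0)) (hVmono : AntitoneOn V (Ici 0))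
    (hZ : ∀ s ∈ Ici (0:ℝ), ∫ t in (0:ℝ)..s, (v t - V t) ≤ 0) :
    ∀ s ∈ Ici (0:ℝ), ∫ t in (0:ℝ)..s, (B (v t) - B (V t)) ≤ 0 := by
  intro s (hs : 0 ≤ s)
  have hv : AntitoneOn v (Icc 0 s) := hvmono.mono Icc_subset_Ici_self
  have hV : AntitoneOn V (Icc 0 s) := hVmono.mono Icc_subset_Ici_self
  have hB_mono : MonotoneOn B (Ici 0) := fun x hx y hy hxy => by
    nlinarith [hBconv.mul_sub_le_sub_of_hasDerivAt hx hy (hBd x hx), hB'pos x hx]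
  have hB'v : AntitoneOn (fun t => B' (v t)) (Icc 0 s) :=
    (hBconv.monotoneOn_of_hasDerivAt hBd).comp_AntitoneOn hv fun t _ => hvnn t
  have hvV : IntervalIntegrable (fun t => v t - V t) volume 0 s :=
    (hv.intervalIntegrable_of_le hs).sub (hV.intervalIntegrable_of_le hs)
  calc ∫ t in (0:ℝ)..s, (B (v t) - B (V t))
      ≤ ∫ t in (0:ℝ)..s, B' (v t) * (v t - V t) := by
        refine intervalIntegral.integral_mono_on hs
          (((hB_mono.comp_AntitoneOn hv fun t _ => hvnn t).intervalIntegrable_of_le hs).sub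
            ((hB_mono.comp_AntitoneOn hV fun t _ => hVnn t).intervalIntegrable_of_le hs))
          (hB'v.intervalIntegrable_mul hs hvV) fun t _ => ?_
        linarith [hBconv.mul_sub_le_sub_of_hasDerivAt (hvnn t) (hVnn t) (hBd _ (hvnn t))]
    _ ≤ 0 := hB'v.intervalIntegral_mul_nonpos hs (hB'pos _ (hvnn s)).le hvV fun u hu => hZ u hu.1

/-- Let `B : [0,∞) → [0,∞)` be convex, `C¹`, with `B′ > 0`, and let `v*, V*` be nonnegative
nonincreasing `C¹` functions. If `Z(s) = ∫_0^s (v* − V*) dτ` satisfies `Z(s) ≤ Z(0) = 0`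
for all `s ≥ 0`, then `Y(s) = ∫_0^s (B(v*) − B(V*)) dτ ≤ 0` for all `s ≥ 0`. -/
theorem Y_nonpos_of_Z_nonpos (B B' v v' V V' : ℝ → ℝ)
    (hBconv : ConvexOn ℝ (Ici 0) B)
    (hBnn : ∀ x ∈ Ici (0:ℝ), 0 ≤ B x)
    (hBd : ∀ x ∈ Ici (0:ℝ), HasDerivAt B (B' x) x)
    (hB'c : ContinuousOn B' (Ici 0))
    (hB'pos : ∀ x ∈ Ici (0:ℝ), 0 < B' x)
    (hvnn : ∀ s, 0 ≤ v s) (hVnn : ∀ s, 0 ≤ V s)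
    (hvmono : AntitoneOn v (Ici 0)) (hVmono : AntitoneOn V (Ici 0))
    (hvd : ∀ s ∈ Ici (0:ℝ), HasDerivAt v (v' s) s)
    (hVd : ∀ s ∈ Ici (0:ℝ), HasDerivAt V (V' s) s)
    (hv'c : ContinuousOn v' (Ici 0)) (hV'c : ContinuousOn V' (Ici 0))
    (hZ : ∀ s ∈ Ici (0:ℝ), ∫ t in (0:ℝ)..s, (v t - V t) ≤ 0) :
    ∀ s ∈ Ici (0:ℝ), ∫ t in (0:ℝ)..s, (B (v t) - B (V t)) ≤ 0 :=
  Y_nonpos_of_Z_nonpos_general B B' v V hBconv hBd hB'pos hvnn hVnn hvmono hVmono hZ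
end

section
/- Let u, f : ℝ^N → ℝ be nonnegative integrable functions, ε > 0, and suppose u ≤ (1/ε)·B(u-values) in the sense that the weak solution identity ∫ f ζ_R − ∫ u ζ_R = ∫ v (−Δ)^{σ/2} ζ_R holds with 0 ≤ v ≤ u/ε, where ζ_R(x) = ζ(|x|/R) is a standard cutoff with ‖(−Δ)^{σ/2} ζ_R‖_∞ ≤ c R^{−σ}. Then letting R → ∞ gives ∫_{ℝ^N} u dx = ∫_{ℝ^N} f dx. -/
open MeasureTheory Set Filter

/-- Mass conservation via cutoffs: if `u, f ≥ 0` are integrable, `0 ≤ v ≤ u/ε`, and for a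
family of cutoffs `ζ_R` (equal to `1` on `B_R`, valued in `[0,1]`) with
`‖(−Δ)^{σ/2} ζ_R‖_∞ ≤ c R^{−σ}` the weak solution identity
`∫ f ζ_R − ∫ u ζ_R = ∫ v (−Δ)^{σ/2} ζ_R` holds, then `∫ u = ∫ f`. -/
theorem mass_conservation {N : ℕ} (u f v : EuclideanSpace ℝ (Fin N) → ℝ)
    (ε c σ : ℝ) (hσ : 0 < σ) (hε : 0 < ε)
    (hu_int : Integrable u) (hf_int : Integrable f)
    (hu_nn : ∀ x, 0 ≤ u x) (hf_nn : ∀ x, 0 ≤ f x)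
    (hv : ∀ x, 0 ≤ v x ∧ v x ≤ u x / ε)
    (ζ w : ℝ → EuclideanSpace ℝ (Fin N) → ℝ)
    (hζm : ∀ R : ℝ, 0 < R → Measurable (ζ R))
    (hζ1 : ∀ R : ℝ, 0 < R → ∀ x, ‖x‖ ≤ R → ζ R x = 1)
    (hζ01 : ∀ R : ℝ, 0 < R → ∀ x, 0 ≤ ζ R x ∧ ζ R x ≤ 1)
    (hw : ∀ R : ℝ, 0 < R → ∀ x, |w R x| ≤ c * R ^ (-σ))
    (hid : ∀ R : ℝ, 0 < R →
      (∫ x, f x * ζ R x) - ∫ x, u x * ζ R x = ∫ x, v x * w R x) :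
    ∫ x, u x = ∫ x, f x := by
  -- Convergence of cutoff integrals via dominated convergence
  have conv : ∀ (g : EuclideanSpace ℝ (Fin N) → ℝ), Integrable g →
      Tendsto (fun n : ℕ => ∫ x, g x * ζ ((n : ℝ) + 1) x) atTop (nhds (∫ x, g x)) := by
    intro g hg
    apply MeasureTheory.tendsto_integral_of_dominated_convergence (fun x => |g x|)
    · intro n
      exact hg.aestronglyMeasurable.mul
        ((hζm ((n : ℝ) + 1) (by positivity)).aestronglyMeasurable)
    · exact hg.abs
    · intro n
      filter_upwards with x
      have h := hζ01 ((n : ℝ) + 1) (by positivity) x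
      rw [Real.norm_eq_abs, abs_mul]
      calc |g x| * |ζ ((n : ℝ) + 1) x| ≤ |g x| * 1 := by
            apply mul_le_mul_of_nonneg_left _ (abs_nonneg _)
            rw [abs_le]; constructor <;> linarith [h.1, h.2]
        _ = |g x| := mul_one _
    · filter_upwards with x
      have hev : ∀ᶠ n : ℕ in atTop, g x * ζ ((n : ℝ) + 1) x = g x := by
        filter_upwards [eventually_ge_atTop ⌈‖x‖⌉₊] with n hn
        rw [hζ1 ((n : ℝ) + 1) (by positivity) x ?_, mul_one]
        calc ‖x‖ ≤ (⌈‖x‖⌉₊ : ℝ) := Nat.le_ceil _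
          _ ≤ (n : ℝ) := by exact_mod_cast hn
          _ ≤ (n : ℝ) + 1 := by linarith
      exact Tendsto.congr' (hev.mono fun n h => h.symm) tendsto_const_nhds
  have key : Tendsto
      (fun n : ℕ => (∫ x, f x * ζ ((n : ℝ) + 1) x) - ∫ x, u x * ζ ((n : ℝ) + 1) x)
      atTop (nhds ((∫ x, f x) - ∫ x, u x)) :=
    (conv f hf_int).sub (conv u hu_int)
  -- The RHS tends to zero
  have hbound : ∀ n : ℕ, |∫ x, v x * w ((n : ℝ) + 1) x| ≤
      ((n : ℝ) + 1) ^ (-σ) * (c * (∫ x, u x) / ε) := by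
    intro n
    have hR : (0 : ℝ) < (n : ℝ) + 1 := by positivity
    have hC : 0 ≤ c * ((n : ℝ) + 1) ^ (-σ) := le_trans (abs_nonneg _) (hw _ hR 0)
    calc |∫ x, v x * w ((n : ℝ) + 1) x| ≤ ∫ x, |v x| * |w ((n : ℝ) + 1) x| := by
          simpa [Real.norm_eq_abs, abs_mul] using
            norm_integral_le_integral_norm (fun x => v x * w ((n : ℝ) + 1) x)
      _ ≤ ∫ x, (c * ((n : ℝ) + 1) ^ (-σ) / ε) * u x := by
          apply integral_mono_of_nonneg
          · filter_upwards with x; exact mul_nonneg (abs_nonneg _) (abs_nonneg _)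
          · exact hu_int.const_mul _
          · filter_upwards with x
            have h1 : |v x| ≤ u x / ε := by
              rw [abs_of_nonneg (hv x).1]; exact (hv x).2
            calc |v x| * |w ((n : ℝ) + 1) x| ≤ (u x / ε) * (c * ((n : ℝ) + 1) ^ (-σ)) :=
                  mul_le_mul h1 (hw _ hR x) (abs_nonneg _)
                    (div_nonneg (hu_nn x) hε.le)
              _ = (c * ((n : ℝ) + 1) ^ (-σ) / ε) * u x := by ring
      _ = (c * ((n : ℝ) + 1) ^ (-σ) / ε) * ∫ x, u x := integral_const_mul _ _
      _ = ((n : ℝ) + 1) ^ (-σ) * (c * (∫ x, u x) / ε) := by ring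
  have h1 : Tendsto (fun n : ℕ => ((n : ℝ) + 1) ^ (-σ)) atTop (nhds 0) :=
    (tendsto_rpow_neg_atTop hσ).comp
      (tendsto_atTop_add_const_right atTop 1 tendsto_natCast_atTop_atTop)
  have h2 : Tendsto (fun n : ℕ => ((n : ℝ) + 1) ^ (-σ) * (c * (∫ x, u x) / ε))
      atTop (nhds 0) := by
    simpa using h1.mul_const (c * (∫ x, u x) / ε)
  have key2 : Tendsto
      (fun n : ℕ => (∫ x, f x * ζ ((n : ℝ) + 1) x) - ∫ x, u x * ζ ((n : ℝ) + 1) x)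
      atTop (nhds 0) := by
    apply squeeze_zero_norm _ h2
    intro n
    rw [hid ((n : ℝ) + 1) (by positivity), Real.norm_eq_abs]
    exact hbound n
  have := tendsto_nhds_unique key key2
  linarith
end

section
/- Let X be a Banach space and 𝒜 an accretive operator on X satisfying the rank condition. For u₀ in the closure of D(𝒜) and any fixed t > 0, the sequence n ↦ (J_{t/n})^n u₀, where J_λ = (I + λ𝒜)^{−1}, is a Cauchy sequence in X (so the Crandall–Liggett exponential formula limit exists). -/
open Set

/-!
For `x ∈ D`, accretivity applied with the step `λμ/(λ+μ)` bounds
`a k n = ‖J_μ^k x - J_λ^n x‖` by the convex combination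
`λ/(λ+μ) * a (k-1) n + μ/(λ+μ) * a k (n-1)`. The quantity `(nλ - kμ)² + nλ² + kμ²` is exactly
affine along this recursion and `√` is concave, so `a k n ≤ ‖A x‖ √((nλ - kμ)² + nλ² + kμ²)`.
For `kμ = nλ = t` the right side is `O(t / √(min k n))`, so the iterates are Cauchy on `D`;
being uniformly `1`-Lipschitz, they stay Cauchy on `closure D`.
-/

/-- Kato's characterisation of accretivity. -/
def AccretiveOn {X : Type*} [NormedAddCommGroup X] [NormedSpace ℝ X] (A : X → X) (D : Set X) :
    Prop :=
  ∀ lam : ℝ, 0 < lam → ∀ x ∈ D, ∀ y ∈ D, ‖x - y‖ ≤ ‖x - y + lam • (A x - A y)‖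

/-- The rank condition: `J lam` inverts `I + lam • A` from `closure D` into `D`. -/
def IsResolventOn {X : Type*} [NormedAddCommGroup X] [NormedSpace ℝ X] (J : ℝ → X → X)
    (A : X → X) (D : Set X) : Prop :=
  ∀ lam : ℝ, 0 < lam → ∀ z ∈ closure D, J lam z ∈ D ∧ J lam z + lam • A (J lam z) = z

theorem cauchySeq_apply_of_mem_closure {α β : Type*} [PseudoMetricSpace α]
    [PseudoMetricSpace β] {f : ℕ → α → β} {D : Set α}
    (hf : ∀ n, LipschitzOnWith 1 (f n) (closure D)) (hD : ∀ x ∈ D, CauchySeq fun n ↦ f n x)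
    {u : α} (hu : u ∈ closure D) : CauchySeq fun n ↦ f n u := by
  rw [Metric.cauchySeq_iff']
  intro ε hε
  obtain ⟨x, hxD, hux⟩ := Metric.mem_closure_iff.mp hu (ε / 3) (by positivity)
  obtain ⟨N, hN⟩ := Metric.cauchySeq_iff'.mp (hD x hxD) (ε / 3) (by positivity)
  have hx : x ∈ closure D := subset_closure hxD
  have hclose : ∀ n, dist (f n u) (f n x) < ε / 3 := fun n ↦ by
    simpa using ((hf n).dist_le_mul u hu x hx).trans_lt (by simpa using hux)
  refine ⟨N, fun n hn ↦ ?_⟩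
  calc dist (f n u) (f N u) ≤ dist (f n u) (f n x) + dist (f n x) (f N x) + dist (f N x) (f N u) :=
        dist_triangle4 _ _ _ _
    _ < ε / 3 + ε / 3 + ε / 3 := by
        gcongr
        · exact hclose n
        · exact hN n hn
        · rw [dist_comm]; exact hclose N
    _ = ε := by ring

theorem le_mul_sqrt_of_recurrence {lam mu C : ℝ} (hlam : 0 < lam) (hmu : 0 < mu) (hC : 0 ≤ C)
    {a : ℕ → ℕ → ℝ} (h0n : ∀ n, a 0 n ≤ C * (n * lam)) (hk0 : ∀ k, a k 0 ≤ C * (k * mu))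
    (hstep : ∀ k n,
      a (k + 1) (n + 1) ≤ lam / (lam + mu) * a k (n + 1) + mu / (lam + mu) * a (k + 1) n)
    (k n : ℕ) : a k n ≤ C * √((n * lam - k * mu) ^ 2 + n * lam ^ 2 + k * mu ^ 2) := by
  set S : ℕ → ℕ → ℝ := fun k n ↦ ((n : ℝ) * lam - k * mu) ^ 2 + n * lam ^ 2 + k * mu ^ 2 with hS
  change a k n ≤ C * √(S k n)
  have hS0 : ∀ k n, 0 ≤ S k n := fun k n ↦ by positivity
  have hsum : lam / (lam + mu) + mu / (lam + mu) = 1 := by field_simp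
  have hcomb : ∀ k n,
      lam / (lam + mu) * S k (n + 1) + mu / (lam + mu) * S (k + 1) n = S (k + 1) (n + 1) := by
    intro k n
    simp only [hS]
    push_cast
    field_simp
    ring
  induction k generalizing n with
  | zero =>
    refine (h0n n).trans (mul_le_mul_of_nonneg_left ?_ hC)
    exact (le_abs_self _).trans (Real.abs_le_sqrt (by simp only [hS]; push_cast; nlinarith))
  | succ k ihk =>
    induction n with
    | zero =>
      refine (hk0 _).trans (mul_le_mul_of_nonneg_left ?_ hC)
      exact (le_abs_self _).trans (Real.abs_le_sqrt (by simp only [hS]; push_cast; nlinarith))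
    | succ n ihn =>
      calc a (k + 1) (n + 1)
          ≤ lam / (lam + mu) * a k (n + 1) + mu / (lam + mu) * a (k + 1) n := hstep k n
        _ ≤ lam / (lam + mu) * (C * √(S k (n + 1))) + mu / (lam + mu) * (C * √(S (k + 1) n)) :=
            add_le_add (mul_le_mul_of_nonneg_left (ihk _) (by positivity))
              (mul_le_mul_of_nonneg_left ihn (by positivity))
        _ = C * (lam / (lam + mu) * √(S k (n + 1)) + mu / (lam + mu) * √(S (k + 1) n)) := by
            ring
        _ ≤ C * √(S (k + 1) (n + 1)) := by
            rw [← hcomb]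
            gcongr
            exact Real.strictConcaveOn_sqrt.concaveOn.2 (hS0 _ _) (hS0 _ _)
              (by positivity) (by positivity) hsum

namespace IsResolventOn

variable {X : Type*} [NormedAddCommGroup X] [NormedSpace ℝ X] {D : Set X} {A : X → X}
  {J : ℝ → X → X} {lam mu : ℝ}

theorem mapsTo (hJ : IsResolventOn J A D) (hlam : 0 < lam) :
    MapsTo (J lam) (closure D) (closure D) :=
  fun _ hz ↦ subset_closure (hJ lam hlam _ hz).1

theorem smul_apply_eq (hJ : IsResolventOn J A D) (hlam : 0 < lam) {z : X} (hz : z ∈ closure D) :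
    lam • A (J lam z) = z - J lam z :=
  eq_sub_of_add_eq' (hJ lam hlam z hz).2

theorem lipschitzOnWith (hA : AccretiveOn A D) (hJ : IsResolventOn J A D) (hlam : 0 < lam) :
    LipschitzOnWith 1 (J lam) (closure D) := by
  refine LipschitzOnWith.mk_one fun z hz w hw ↦ ?_
  have h := hA lam hlam _ (hJ lam hlam z hz).1 _ (hJ lam hlam w hw).1
  rwa [smul_sub, hJ.smul_apply_eq hlam hz, hJ.smul_apply_eq hlam hw,
    show J lam z - J lam w + (z - J lam z - (w - J lam w)) = z - w by abel,
    ← dist_eq_norm, ← dist_eq_norm] at h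

theorem lipschitzOnWith_iterate (hA : AccretiveOn A D) (hJ : IsResolventOn J A D)
    (hlam : 0 < lam) (n : ℕ) : LipschitzOnWith 1 (J lam)^[n] (closure D) := by
  induction n with
  | zero => exact LipschitzWith.id.lipschitzOnWith
  | succ n ih =>
    rw [Function.iterate_succ]
    simpa using ih.comp (hJ.lipschitzOnWith hA hlam) (hJ.mapsTo hlam)

theorem norm_apply_sub_le (hA : AccretiveOn A D) (hJ : IsResolventOn J A D) (hlam : 0 < lam)
    {x : X} (hx : x ∈ D) : ‖J lam x - x‖ ≤ lam * ‖A x‖ := by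
  have h := hA lam hlam _ (hJ lam hlam x (subset_closure hx)).1 x hx
  rwa [smul_sub, hJ.smul_apply_eq hlam (subset_closure hx),
    show J lam x - x + (x - J lam x - lam • A x) = -(lam • A x) by abel, norm_neg, norm_smul,
    Real.norm_of_nonneg hlam.le] at h

theorem norm_iterate_sub_le (hA : AccretiveOn A D) (hJ : IsResolventOn J A D) (hlam : 0 < lam)
    {x : X} (hx : x ∈ D) (n : ℕ) : ‖(J lam)^[n] x - x‖ ≤ n * lam * ‖A x‖ := by
  induction n with
  | zero => simp
  | succ n ih =>
    have hstep : ‖(J lam)^[n + 1] x - (J lam)^[n] x‖ ≤ lam * ‖A x‖ := by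
      rw [Function.iterate_succ_apply, ← dist_eq_norm]
      refine ((hJ.lipschitzOnWith_iterate hA hlam n).dist_le_mul _
        (hJ.mapsTo hlam (subset_closure hx)) _ (subset_closure hx)).trans ?_
      simpa [dist_eq_norm] using hJ.norm_apply_sub_le hA hlam hx
    calc ‖(J lam)^[n + 1] x - x‖
        ≤ ‖(J lam)^[n + 1] x - (J lam)^[n] x‖ + ‖(J lam)^[n] x - x‖ :=
          norm_sub_le_norm_sub_add_norm_sub _ _ _
      _ ≤ lam * ‖A x‖ + n * lam * ‖A x‖ := add_le_add hstep ih
      _ = (n + 1 : ℕ) * lam * ‖A x‖ := by push_cast; ring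

theorem norm_apply_sub_apply_le (hA : AccretiveOn A D) (hJ : IsResolventOn J A D)
    (hlam : 0 < lam) (hmu : 0 < mu) {w z : X} (hw : w ∈ closure D) (hz : z ∈ closure D) :
    ‖J mu w - J lam z‖ ≤
      lam / (lam + mu) * ‖w - J lam z‖ + mu / (lam + mu) * ‖J mu w - z‖ := by
  have hAw : A (J mu w) = mu⁻¹ • (w - J mu w) := by
    rw [← hJ.smul_apply_eq hmu hw, inv_smul_smul₀ hmu.ne']
  have hAz : A (J lam z) = lam⁻¹ • (z - J lam z) := by
    rw [← hJ.smul_apply_eq hlam hz, inv_smul_smul₀ hlam.ne']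
  have hid : J mu w - J lam z + (lam * mu / (lam + mu)) • (A (J mu w) - A (J lam z)) =
      (lam / (lam + mu)) • (w - J lam z) + (mu / (lam + mu)) • (J mu w - z) := by
    rw [hAw, hAz]
    match_scalars <;> field_simp <;> ring
  calc ‖J mu w - J lam z‖
      ≤ ‖J mu w - J lam z + (lam * mu / (lam + mu)) • (A (J mu w) - A (J lam z))‖ :=
        hA _ (by positivity) _ (hJ mu hmu w hw).1 _ (hJ lam hlam z hz).1
    _ ≤ ‖(lam / (lam + mu)) • (w - J lam z)‖ + ‖(mu / (lam + mu)) • (J mu w - z)‖ :=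
        hid ▸ norm_add_le _ _
    _ = lam / (lam + mu) * ‖w - J lam z‖ + mu / (lam + mu) * ‖J mu w - z‖ := by
        rw [norm_smul, norm_smul, Real.norm_of_nonneg (by positivity),
          Real.norm_of_nonneg (by positivity)]

theorem norm_iterate_sub_iterate_le (hA : AccretiveOn A D) (hJ : IsResolventOn J A D)
    (hlam : 0 < lam) (hmu : 0 < mu) {x : X} (hx : x ∈ D) (k n : ℕ) :
    ‖(J mu)^[k] x - (J lam)^[n] x‖ ≤
      ‖A x‖ * √((n * lam - k * mu) ^ 2 + n * lam ^ 2 + k * mu ^ 2) := by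
  refine le_mul_sqrt_of_recurrence hlam hmu (norm_nonneg (A x))
    (a := fun k n ↦ ‖(J mu)^[k] x - (J lam)^[n] x‖) (fun m ↦ ?_) (fun j ↦ ?_)
    (fun j m ↦ ?_) k n
  · rw [Function.iterate_zero_apply, norm_sub_rev, mul_comm]
    exact hJ.norm_iterate_sub_le hA hlam hx m
  · rw [Function.iterate_zero_apply, mul_comm]
    exact hJ.norm_iterate_sub_le hA hmu hx j
  · have hiter : ∀ {nu : ℝ} (hnu : 0 < nu) (m : ℕ), (J nu)^[m] x ∈ closure D :=
      fun hnu m ↦ (hJ.mapsTo hnu).iterate m (subset_closure hx)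
    rw [Function.iterate_succ_apply', Function.iterate_succ_apply']
    simpa only [← Function.iterate_succ_apply' (J mu), ← Function.iterate_succ_apply' (J lam)]
      using hJ.norm_apply_sub_apply_le hA hlam hmu (hiter hmu j) (hiter hlam m)

theorem cauchySeq_iterate (hA : AccretiveOn A D) (hJ : IsResolventOn J A D) {t : ℝ}
    (ht : 0 < t) {x : X} (hx : x ∈ D) :
    CauchySeq fun n : ℕ ↦ (J (t / (n + 1 : ℝ)))^[n + 1] x := by
  refine cauchySeq_of_le_tendsto_0 (fun N : ℕ ↦ ‖A x‖ * √(2 * t ^ 2 * (1 / ((N : ℝ) + 1))))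
    (fun p q N hp hq ↦ ?_) ?_
  · rw [dist_eq_norm]
    refine (hJ.norm_iterate_sub_iterate_le hA (by positivity) (by positivity) hx _ _).trans ?_
    have hsplit :
        (((q + 1 : ℕ) : ℝ) * (t / (q + 1 : ℝ)) - ((p + 1 : ℕ) : ℝ) * (t / (p + 1 : ℝ))) ^ 2
        + ((q + 1 : ℕ) : ℝ) * (t / (q + 1 : ℝ)) ^ 2 + ((p + 1 : ℕ) : ℝ) * (t / (p + 1 : ℝ)) ^ 2
        = t ^ 2 / (q + 1) + t ^ 2 / (p + 1) := by
      push_cast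
      field_simp
      ring
    have hp' : (N : ℝ) + 1 ≤ p + 1 := by gcongr
    have hq' : (N : ℝ) + 1 ≤ q + 1 := by gcongr
    rw [hsplit]
    gcongr
    calc t ^ 2 / (q + 1) + t ^ 2 / (p + 1) ≤ t ^ 2 / (N + 1) + t ^ 2 / (N + 1) := by gcongr
      _ = 2 * t ^ 2 * (1 / ((N : ℝ) + 1)) := by ring
  · simpa using ((tendsto_one_div_add_atTop_nhds_zero_nat.const_mul (2 * t ^ 2)).sqrt).const_mul
      ‖A x‖

end IsResolventOn

theorem crandall_liggett_cauchy_general (X : Type*) [NormedAddCommGroup X] [NormedSpace ℝ X]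
    (D : Set X) (A : X → X) (J : ℝ → X → X)
    (haccr : ∀ lam : ℝ, 0 < lam → ∀ x ∈ D, ∀ y ∈ D,
      ‖x - y‖ ≤ ‖x - y + lam • (A x - A y)‖)
    (hJres : ∀ lam : ℝ, 0 < lam → ∀ z ∈ closure D,
      J lam z ∈ D ∧ J lam z + lam • A (J lam z) = z)
    (u₀ : X) (hu₀ : u₀ ∈ closure D) (t : ℝ) (ht : 0 < t) :
    CauchySeq (fun n : ℕ => (J (t / (n + 1 : ℝ)))^[n + 1] u₀) :=
  cauchySeq_apply_of_mem_closure
    (fun n ↦ IsResolventOn.lipschitzOnWith_iterate haccr hJres (by positivity) (n + 1))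
    (fun _ hx ↦ IsResolventOn.cauchySeq_iterate haccr hJres ht hx) hu₀

/-- **Crandall–Liggett**: for an accretive operator `A` with domain `D` satisfying the rank
condition (encoded by the resolvent family `J`), and `u₀` in the closure of `D`, the
sequence `n ↦ (J_{t/n})^n u₀` is Cauchy, so the exponential formula limit exists. -/
theorem crandall_liggett_cauchy (X : Type*) [NormedAddCommGroup X] [NormedSpace ℝ X]
    [CompleteSpace X] (D : Set X) (A : X → X) (J : ℝ → X → X)
    (haccr : ∀ lam : ℝ, 0 < lam → ∀ x ∈ D, ∀ y ∈ D,
      ‖x - y‖ ≤ ‖x - y + lam • (A x - A y)‖)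
    (hJres : ∀ lam : ℝ, 0 < lam → ∀ z ∈ closure D,
      J lam z ∈ D ∧ J lam z + lam • A (J lam z) = z)
    (hJlip : ∀ lam : ℝ, 0 < lam → ∀ z ∈ closure D, ∀ w ∈ closure D,
      ‖J lam z - J lam w‖ ≤ ‖z - w‖)
    (u₀ : X) (hu₀ : u₀ ∈ closure D) (t : ℝ) (ht : 0 < t) :
    CauchySeq (fun n : ℕ => (J (t / (n + 1 : ℝ)))^[n + 1] u₀) :=
  crandall_liggett_cauchy_general X D A J haccr hJres u₀ hu₀ t ht
end
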